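/- In a Grothendieck topos, every locally constant object is decidable. -/

import Mathlib

/-!
Formalisation of a statement from "On the profinite fundamental group of a
connected Grothendieck topos" (Berger–Iwaniack).  A Grothendieck topos is
modelled as `Sheaf J (Type u)` for a small site `(C, J)`.
-/

open CategoryTheory CategoryTheory.Limits

universe u

instance {C : Type u} [SmallCategory C] {J : GrothendieckTopology C} {K : Type*} [Category K]
    [HasColimitsOfShape K (Type u)] (F : K ⥤ Sheaf J (Type u)) : HasColimit F :=
  (Sheaf.instHasColimitsOfShape (J := J) (K := K)).has_colimit F

instance {C : Type u} [SmallCategory C] {J : GrothendieckTopology C} :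
    HasBinaryCoproducts (Sheaf J (Type u)) :=
  Sheaf.instHasColimitsOfShape

instance {C : Type u} [SmallCategory C] {J : GrothendieckTopology C} :
    HasInitial (Sheaf J (Type u)) :=
  Sheaf.instHasColimitsOfShape

/-- A subobject `s` of `X` is complemented if it has a complement in the
subobject lattice of `X`. -/
def IsComplementedSub {C : Type u} [SmallCategory C] {J : GrothendieckTopology C}
    {X : Sheaf J (Type u)} (s : Subobject X) : Prop :=
  ∃ t : Subobject X, s ⊓ t = ⊥ ∧ s ⊔ t = ⊤

/-- An object is decidable if its diagonal, regarded as a subobject of `X ⨯ X`,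
is complemented. -/
def IsDecidableObj {C : Type u} [SmallCategory C] {J : GrothendieckTopology C}
    (X : Sheaf J (Type u)) : Prop :=
  IsComplementedSub (Subobject.mk (diag X))

/-- An object is connected if it is not initial and its only complemented
subobjects are `⊥` and `⊤`. -/
def IsConnectedObj {C : Type u} [SmallCategory C] {J : GrothendieckTopology C}
    (X : Sheaf J (Type u)) : Prop :=
  (¬ Nonempty (IsInitial X)) ∧
    ∀ s : Subobject X, IsComplementedSub s → s = ⊥ ∨ s = ⊤

/-- An object is locally connected if it is (isomorphic to) a coproduct of
connected objects. -/
def IsLocallyConnectedObj {C : Type u} [SmallCategory C] {J : GrothendieckTopology C}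
    (X : Sheaf J (Type u)) : Prop :=
  ∃ (I : Type u) (Z : I → Sheaf J (Type u)),
    (∀ i, IsConnectedObj (Z i)) ∧ Nonempty (X ≅ ∐ Z)

/-- An object is locally constant if it is trivialised, with constant fibres,
by some cover of the terminal object. -/
def IsLocallyConstantObj {C : Type u} [SmallCategory C] {J : GrothendieckTopology C}
    (X : Sheaf J (Type u)) : Prop :=
  ∃ (I : Type u) (U : I → Sheaf J (Type u)),
    Epi (terminal.from (∐ U)) ∧
    ∀ i, ∃ (S : Type u)
      (e : X ⨯ U i ≅ (constantSheaf J (Type u)).obj S ⨯ U i),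
      e.hom ≫ Limits.prod.snd = Limits.prod.snd

/-- An object is locally finite if it is trivialised, with finite constant
fibres, by some cover of the terminal object. -/
def IsLocallyFiniteObj {C : Type u} [SmallCategory C] {J : GrothendieckTopology C}
    (X : Sheaf J (Type u)) : Prop :=
  ∃ (I : Type u) (U : I → Sheaf J (Type u)),
    Epi (terminal.from (∐ U)) ∧
    ∀ i, ∃ (n : ℕ)
      (e : X ⨯ U i ≅ (constantSheaf J (Type u)).obj (ULift.{u} (Fin n)) ⨯ U i),
      e.hom ≫ Limits.prod.snd = Limits.prod.snd

/-- An object is finite if it is locally finite and a finite coproduct of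
connected objects. -/
def IsFiniteObj {C : Type u} [SmallCategory C] {J : GrothendieckTopology C}
    (X : Sheaf J (Type u)) : Prop :=
  IsLocallyFiniteObj X ∧
    ∃ (n : ℕ) (Z : Fin n → Sheaf J (Type u)),
      (∀ k, IsConnectedObj (Z k)) ∧ Nonempty (X ≅ ∐ Z)

/-- An object is a sum of finite objects if it is isomorphic to a coproduct of
finite objects. -/
def IsSumOfFiniteObj {C : Type u} [SmallCategory C] {J : GrothendieckTopology C}
    (X : Sheaf J (Type u)) : Prop :=
  ∃ (I : Type u) (Z : I → Sheaf J (Type u)),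
    (∀ i, IsFiniteObj (Z i)) ∧ Nonempty (X ≅ ∐ Z)

/-- A Galois object: a connected, globally supported object `A` such that the
canonical morphism `∐_{g ∈ Aut A} A ⟶ A ⨯ A` is an isomorphism. -/
def IsGaloisObj {C : Type u} [SmallCategory C] {J : GrothendieckTopology C}
    (A : Sheaf J (Type u)) : Prop :=
  IsConnectedObj A ∧ Epi (terminal.from A) ∧
    IsIso (Sigma.desc (f := fun _ : Aut A => A)
      (fun g => Limits.prod.lift (𝟙 A) g.hom))

/-!
The complement of the diagonal of `X` is the subsheaf of pairs of sections that are *apart*,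
i.e. agree only over objects covered by the empty sieve. The diagonal and this subsheaf meet in
a sheaf all of whose sections live over such objects, hence in `⊥`. They cover `X ⨯ X` as soon
as any two sections of `X` are locally either equal or apart. This holds in a constant sheaf
`γ*S`, whose sections are locally elements of `S`, and the trivialisations
`X ⨯ U i ≅ γ*S i ⨯ U i` transport it to `X` over each `U i`; since the `U i` cover `1`, it holds
for `X`.
-/

open Opposite

namespace CategoryTheory.Sheaf

variable {C : Type u} [SmallCategory C] {J : GrothendieckTopology C}

lemma congr_hom_app {X Y : Sheaf J (Type u)} {f g : X ⟶ Y} (h : f = g) (c : Cᵒᵖ)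
    (x : X.obj.obj c) : f.hom.app c x = g.hom.app c x := by
  rw [h]

lemma injective_hom_app_of_mono {X Y : Sheaf J (Type u)} (f : X ⟶ Y) [Mono f] (c : Cᵒᵖ) :
    Function.Injective (f.hom.app c) := by
  have : Mono f.hom := (sheafToPresheaf J (Type u)).map_mono f
  exact (mono_iff_injective _).1 inferInstance

noncomputable def prodSectionsEquiv (A B : Sheaf J (Type u)) (c : Cᵒᵖ) :
    (A ⨯ B).obj.obj c ≃ A.obj.obj c × B.obj.obj c :=
  (PreservesLimitPair.iso (sheafToPresheaf J (Type u) ⋙ (evaluation Cᵒᵖ (Type u)).obj c) A B ≪≫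
    Types.binaryProductIso _ _).toEquiv

@[simp]
lemma prodSectionsEquiv_apply (A B : Sheaf J (Type u)) (c : Cᵒᵖ) (w : (A ⨯ B).obj.obj c) :
    prodSectionsEquiv A B c w =
      ((prod.fst : A ⨯ B ⟶ A).hom.app c w, (prod.snd : A ⨯ B ⟶ B).hom.app c w) := by
  ext
  · exact ConcreteCategory.congr_hom
      (prodComparison_fst (sheafToPresheaf J (Type u) ⋙ (evaluation Cᵒᵖ (Type u)).obj c) A B) w
  · exact ConcreteCategory.congr_hom
      (prodComparison_snd (sheafToPresheaf J (Type u) ⋙ (evaluation Cᵒᵖ (Type u)).obj c) A B) w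

lemma prod_sections_ext {A B : Sheaf J (Type u)} {c : Cᵒᵖ} {w w' : (A ⨯ B).obj.obj c}
    (h₁ : (prod.fst : A ⨯ B ⟶ A).hom.app c w = (prod.fst : A ⨯ B ⟶ A).hom.app c w')
    (h₂ : (prod.snd : A ⨯ B ⟶ B).hom.app c w = (prod.snd : A ⨯ B ⟶ B).hom.app c w') :
    w = w' :=
  (prodSectionsEquiv A B c).injective (by simp [h₁, h₂])

lemma fst_hom_app_diag_hom_app (X : Sheaf J (Type u)) (c : Cᵒᵖ) (x : X.obj.obj c) :
    (prod.fst : X ⨯ X ⟶ X).hom.app c ((diag X).hom.app c x) = x :=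
  congr_hom_app (prod.lift_fst (𝟙 X) (𝟙 X)) c x

lemma snd_hom_app_diag_hom_app (X : Sheaf J (Type u)) (c : Cᵒᵖ) (x : X.obj.obj c) :
    (prod.snd : X ⨯ X ⟶ X).hom.app c ((diag X).hom.app c x) = x :=
  congr_hom_app (prod.lift_snd (𝟙 X) (𝟙 X)) c x

noncomputable def isInitialOfBotMem (W : Sheaf J (Type u))
    (h : ∀ d : C, W.obj.obj (op d) → (⊥ : Sieve d) ∈ J d) : IsInitial W :=
  let uniq (Z : Sheaf J (Type u)) (c : Cᵒᵖ) (w : W.obj.obj c) : Unique (Z.obj.obj c) :=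
    Types.isTerminalEquivUnique _ (Z.isTerminalOfBotCover _ (h c.unop w))
  IsInitial.ofUniqueHom
    (fun Z => ObjectProperty.homMk
      { app := fun c => ↾fun w => (uniq Z c w).default
        naturality := fun c c' f => by
          ext w
          exact @Subsingleton.elim _ (uniq Z c' (W.obj.map f w)).instSubsingleton _ _ })
    (fun Z m => by
      apply ObjectProperty.hom_ext
      ext c w
      exact (uniq Z c w).uniq _)

/-- `x ≠ y` in the internal logic of the topos. -/
def Apart (X : Sheaf J (Type u)) {d : C} (x y : X.obj.obj (op d)) : Prop :=
  ∀ ⦃e : C⦄ (k : e ⟶ d), X.obj.map k.op x = X.obj.map k.op y → (⊥ : Sieve e) ∈ J e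

lemma Apart.map {X : Sheaf J (Type u)} {d : C} {x y : X.obj.obj (op d)} (h : Apart X x y)
    {e : C} (f : e ⟶ d) : Apart X (X.obj.map f.op x) (X.obj.map f.op y) := by
  intro e' k hk
  apply h (k ≫ f)
  simpa only [op_comp, Functor.map_comp_apply] using hk

lemma Apart.of_hom_app {X Y : Sheaf J (Type u)} (φ : X ⟶ Y) {d : C} {x y : X.obj.obj (op d)}
    (h : Apart Y (φ.hom.app _ x) (φ.hom.app _ y)) : Apart X x y := by
  intro e k hk
  apply h k
  rw [← NatTrans.naturality_apply, ← NatTrans.naturality_apply, hk]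

lemma apart_of_forall_mem {X : Sheaf J (Type u)} {d : C} {x y : X.obj.obj (op d)}
    {S : Sieve d} (hS : S ∈ J d)
    (h : ∀ ⦃e : C⦄ (f : e ⟶ d), S f → Apart X (X.obj.map f.op x) (X.obj.map f.op y)) :
    Apart X x y := by
  intro e k hk
  refine J.transitive (J.pullback_stable k hS) _ fun e' f hf => h (f ≫ k) hf (𝟙 e') ?_
  simp only [op_id, op_comp, Functor.map_id_apply, Functor.map_comp_apply, hk]

def apartSubfunctor (X : Sheaf J (Type u)) : Subfunctor (X ⨯ X).obj where
  obj c :=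
    {p | Apart X ((prod.fst : X ⨯ X ⟶ X).hom.app c p) ((prod.snd : X ⨯ X ⟶ X).hom.app c p)}
  map {c c'} f p hp := by
    simp only [Set.mem_preimage, Set.mem_ofPred_eq, NatTrans.naturality_apply] at hp ⊢
    exact hp.map f.unop

lemma isSheaf_apartSubfunctor (X : Sheaf J (Type u)) :
    Presieve.IsSheaf J (apartSubfunctor X).toFunctor := by
  refine (Subfunctor.isSheaf_iff _ ((isSheaf_iff_isSheaf_of_type _ _).1 (X ⨯ X).property)).2 ?_
  intro d p hp
  refine apart_of_forall_mem hp fun e f hf => ?_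
  rw [← NatTrans.naturality_apply, ← NatTrans.naturality_apply]
  exact hf

noncomputable def apartSheaf (X : Sheaf J (Type u)) : Sheaf J (Type u) :=
  ⟨(apartSubfunctor X).toFunctor, (isSheaf_iff_isSheaf_of_type _ _).2 (isSheaf_apartSubfunctor X)⟩

noncomputable def apartι (X : Sheaf J (Type u)) : apartSheaf X ⟶ X ⨯ X :=
  ObjectProperty.homMk (apartSubfunctor X).ι

instance (X : Sheaf J (Type u)) : Mono (apartι X) :=
  (sheafToPresheaf J (Type u)).mono_of_mono_map (inferInstanceAs (Mono (apartSubfunctor X).ι))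

def decidedSieve (X : Sheaf J (Type u)) {d : C} (x y : X.obj.obj (op d)) : Sieve d where
  arrows _ f :=
    X.obj.map f.op x = X.obj.map f.op y ∨ Apart X (X.obj.map f.op x) (X.obj.map f.op y)
  downward_closed {e e'} f hf g := by
    simp only [op_comp, Functor.map_comp_apply]
    exact hf.imp (congrArg _) (Apart.map · g)

lemma decidedSieve_self (X : Sheaf J (Type u)) {d : C} (x : X.obj.obj (op d)) :
    decidedSieve X x x = ⊤ :=
  Sieve.ext fun _ _ => iff_of_true (Or.inl rfl) trivial

lemma pullback_decidedSieve (X : Sheaf J (Type u)) {d e : C} (x y : X.obj.obj (op d))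
    (f : e ⟶ d) :
    (decidedSieve X x y).pullback f = decidedSieve X (X.obj.map f.op x) (X.obj.map f.op y) := by
  ext e' g
  simp only [Sieve.pullback_apply, decidedSieve, op_comp, Functor.map_comp_apply]

lemma decidedSieve_mem_of_forall_mem {X : Sheaf J (Type u)} {d : C} {x y : X.obj.obj (op d)}
    {S : Sieve d} (hS : S ∈ J d)
    (h : ∀ ⦃e : C⦄ (f : e ⟶ d), S f →
      decidedSieve X (X.obj.map f.op x) (X.obj.map f.op y) ∈ J e) :
    decidedSieve X x y ∈ J d :=
  J.transitive hS _ fun _ f hf => by rw [pullback_decidedSieve]; exact h f hf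

lemma decidedSieve_le_of_mono {X Y : Sheaf J (Type u)} (φ : X ⟶ Y) [Mono φ] {d : C}
    (x y : X.obj.obj (op d)) :
    decidedSieve Y (φ.hom.app _ x) (φ.hom.app _ y) ≤ decidedSieve X x y := by
  intro e f hf
  simp only [decidedSieve, ← NatTrans.naturality_apply] at hf
  exact hf.imp (fun h => injective_hom_app_of_mono φ _ h) (Apart.of_hom_app φ)

lemma decidedSieve_fst_inf_decidedSieve_snd_le {A B : Sheaf J (Type u)} {d : C}
    (w w' : (A ⨯ B).obj.obj (op d)) :
    decidedSieve A ((prod.fst : A ⨯ B ⟶ A).hom.app _ w) ((prod.fst : A ⨯ B ⟶ A).hom.app _ w') ⊓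
      decidedSieve B ((prod.snd : A ⨯ B ⟶ B).hom.app _ w) ((prod.snd : A ⨯ B ⟶ B).hom.app _ w')
      ≤ decidedSieve (A ⨯ B) w w' := by
  rintro e f ⟨hfst, hsnd⟩
  simp only [decidedSieve, ← NatTrans.naturality_apply] at hfst hsnd
  rcases hfst with hfst | hfst
  · rcases hsnd with hsnd | hsnd
    · exact Or.inl (prod_sections_ext hfst hsnd)
    · exact Or.inr (hsnd.of_hom_app _)
  · exact Or.inr (hfst.of_hom_app _)

lemma decidedSieve_le_decidedSieve_fst {A B : Sheaf J (Type u)} {d : C}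
    {w w' : (A ⨯ B).obj.obj (op d)}
    (h : (prod.snd : A ⨯ B ⟶ B).hom.app _ w = (prod.snd : A ⨯ B ⟶ B).hom.app _ w') :
    decidedSieve (A ⨯ B) w w' ≤
      decidedSieve A ((prod.fst : A ⨯ B ⟶ A).hom.app _ w)
        ((prod.fst : A ⨯ B ⟶ A).hom.app _ w') := by
  rintro e f (heq | hap)
  · left
    simp only [← NatTrans.naturality_apply, heq]
  · right
    intro e' k hk
    refine hap k (prod_sections_ext ?_ ?_)
    · simpa only [← NatTrans.naturality_apply] using hk
    · simp only [NatTrans.naturality_apply, h]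

def LocallyDecidableEq (X : Sheaf J (Type u)) : Prop :=
  ∀ ⦃d : C⦄ (x y : X.obj.obj (op d)), decidedSieve X x y ∈ J d

lemma mk_inf_mk_eq_bot {B A₁ A₂ : Sheaf J (Type u)} (f : A₁ ⟶ B) (g : A₂ ⟶ B) [Mono f] [Mono g]
    (H : ∀ ⦃d : C⦄ (a : A₁.obj.obj (op d)) (b : A₂.obj.obj (op d)),
      f.hom.app _ a = g.hom.app _ b → (⊥ : Sieve d) ∈ J d) :
    Subobject.mk f ⊓ Subobject.mk g = ⊥ := by
  set P := Subobject.mk f ⊓ Subobject.mk g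
  let u := Subobject.ofLE P _ inf_le_left ≫ (Subobject.underlyingIso f).hom
  let v := Subobject.ofLE P _ inf_le_right ≫ (Subobject.underlyingIso g).hom
  have huv : u ≫ f = v ≫ g := by simp [u, v]
  have hP : IsInitial (P : Sheaf J (Type u)) :=
    isInitialOfBotMem _ fun d w => H (u.hom.app _ w) (v.hom.app _ w) (congr_hom_app huv _ w)
  rw [eq_bot_iff, Subobject.bot_eq_initial_to]
  exact Subobject.le_mk_of_comm (hP.to _) (hP.hom_ext _ _)

lemma mk_sup_mk_eq_top {B A₁ A₂ : Sheaf J (Type u)} (f : A₁ ⟶ B) (g : A₂ ⟶ B) [Mono f] [Mono g]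
    (H : ∀ ⦃d : C⦄ (p : B.obj.obj (op d)),
      Presheaf.imageSieve f.hom p ⊔ Presheaf.imageSieve g.hom p ∈ J d) :
    Subobject.mk f ⊔ Subobject.mk g = ⊤ := by
  set P := Subobject.mk f ⊔ Subobject.mk g
  have hle {A : Sheaf J (Type u)} (h : A ⟶ B) (hP : P.Factors h) {d : C} (p : B.obj.obj (op d)) :
      Presheaf.imageSieve h.hom p ≤ Presheaf.imageSieve P.arrow.hom p := by
    rintro e k ⟨t, ht⟩
    exact ⟨(P.factorThru h hP).hom.app _ t, (congr_hom_app (P.factorThru_arrow h hP) _ t).trans ht⟩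
  have : IsLocallySurjective P.arrow := ⟨fun p => J.superset_covering
    (sup_le (hle f (Subobject.sup_factors_of_factors_left (Subobject.mk_factors_self f)) p)
      (hle g (Subobject.sup_factors_of_factors_right (Subobject.mk_factors_self g)) p)) (H p)⟩
  have := isIso_of_mono_of_epi P.arrow
  exact Subobject.eq_top_of_isIso_arrow P

lemma LocallyDecidableEq.isDecidableObj {X : Sheaf J (Type u)} (hX : LocallyDecidableEq X) :
    IsDecidableObj X := by
  refine ⟨Subobject.mk (apartι X), mk_inf_mk_eq_bot _ _ fun d a b hab => ?_,
    mk_sup_mk_eq_top _ _ fun d p => J.superset_covering ?_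
      (hX ((prod.fst : X ⨯ X ⟶ X).hom.app _ p) ((prod.snd : X ⨯ X ⟶ X).hom.app _ p))⟩
  · refine b.2 (𝟙 d) ?_
    change X.obj.map _ ((prod.fst : X ⨯ X ⟶ X).hom.app _ ((apartι X).hom.app _ b)) =
      X.obj.map _ ((prod.snd : X ⨯ X ⟶ X).hom.app _ ((apartι X).hom.app _ b))
    rw [← hab, fst_hom_app_diag_hom_app, snd_hom_app_diag_hom_app]
  · rintro e f (heq | hap)
    · refine Or.inl ⟨X.obj.map f.op ((prod.fst : X ⨯ X ⟶ X).hom.app _ p), prod_sections_ext ?_ ?_⟩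
      · rw [fst_hom_app_diag_hom_app, NatTrans.naturality_apply]
      · rw [snd_hom_app_diag_hom_app, NatTrans.naturality_apply, heq]
    · refine Or.inr ⟨⟨(X ⨯ X).obj.map f.op p, ?_⟩, rfl⟩
      simpa only [apartSubfunctor, Set.mem_ofPred_eq, NatTrans.naturality_apply] using hap

lemma locallyDecidableEq_constantSheaf (S : Type u) :
    LocallyDecidableEq ((constantSheaf J (Type u)).obj S) := by
  intro d z z'
  let η := toSheafify J ((Functor.const Cᵒᵖ).obj S)
  refine J.superset_covering ?_ (J.intersection_covering
    (Presheaf.imageSieve_mem J η z) (Presheaf.imageSieve_mem J η z'))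
  rintro e f ⟨⟨s, hs : η.app _ s = ((constantSheaf J (Type u)).obj S).obj.map f.op z⟩,
    ⟨s', hs' : η.app _ s' = ((constantSheaf J (Type u)).obj S).obj.map f.op z'⟩⟩
  change _ = _ ∨ Apart _ _ _
  rw [← hs, ← hs']
  by_cases hss : s = s'
  · exact Or.inl (by rw [hss])
  · refine Or.inr fun e' k hk => ?_
    have hη : η.app (op e') s = η.app (op e') s' :=
      (NatTrans.naturality_apply η k.op s).trans
        (hk.trans (NatTrans.naturality_apply η k.op s').symm)
    exact J.superset_covering (fun _ _ h => hss h)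
      (Presheaf.equalizerSieve_mem J η (X := op e') s s' hη)

lemma decidedSieve_mem_of_iso_constantSheaf_prod {X U : Sheaf J (Type u)} {S : Type u}
    (τ : X ⨯ U ≅ (constantSheaf J (Type u)).obj S ⨯ U) (hτ : τ.hom ≫ prod.snd = prod.snd)
    {d : C} (u : U.obj.obj (op d)) (x y : X.obj.obj (op d)) : decidedSieve X x y ∈ J d := by
  let w := (prodSectionsEquiv X U _).symm (x, u)
  let w' := (prodSectionsEquiv X U _).symm (y, u)
  have hw := (prodSectionsEquiv X U _).apply_symm_apply (x, u)
  have hw' := (prodSectionsEquiv X U _).apply_symm_apply (y, u)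
  simp only [prodSectionsEquiv_apply, Prod.mk.injEq] at hw hw'
  have hsnd (v : (X ⨯ U).obj.obj (op d)) :
      (prod.snd : _ ⨯ U ⟶ U).hom.app _ (τ.hom.hom.app _ v) = (prod.snd : X ⨯ U ⟶ U).hom.app _ v :=
    congr_hom_app hτ _ v
  refine J.superset_covering ?_ (locallyDecidableEq_constantSheaf S
    ((prod.fst : _ ⨯ U ⟶ _).hom.app _ (τ.hom.hom.app _ w))
    ((prod.fst : _ ⨯ U ⟶ _).hom.app _ (τ.hom.hom.app _ w')))
  calc _ = decidedSieve _ _ _ ⊓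
        decidedSieve U ((prod.snd : _ ⨯ U ⟶ U).hom.app _ (τ.hom.hom.app _ w))
          ((prod.snd : _ ⨯ U ⟶ U).hom.app _ (τ.hom.hom.app _ w')) := by
        rw [hsnd, hsnd, hw.2, hw'.2, decidedSieve_self, inf_top_eq]
    _ ≤ decidedSieve _ (τ.hom.hom.app _ w) (τ.hom.hom.app _ w') :=
        decidedSieve_fst_inf_decidedSieve_snd_le _ _
    _ ≤ decidedSieve (X ⨯ U) w w' := decidedSieve_le_of_mono τ.hom w w'
    _ ≤ decidedSieve X _ _ := decidedSieve_le_decidedSieve_fst (hw.2.trans hw'.2.symm)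
    _ = decidedSieve X x y := by rw [hw.1, hw'.1]

lemma isLocallySurjective_sigmaDesc_ι_hom {I : Type u} (U : I → Sheaf J (Type u)) :
    Presheaf.IsLocallySurjective J
      (Limits.Sigma.desc fun i => (Limits.Sigma.ι U i).hom :
        (∐ fun i => (U i).obj) ⟶ (∐ U).obj) := by
  rw [← Presheaf.isLocallySurjective_presheafToSheaf_map_iff, isLocallySurjective_iff_epi']
  let G := presheafToSheaf J (Type u)
  let ε := (sheafificationAdjunction J (Type u)).counit
  let κ : (∐ fun i => (U i).obj) ⟶ (∐ U).obj :=
    Limits.Sigma.desc fun i => (Limits.Sigma.ι U i).hom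
  let σ : ∐ U ⟶ G.obj (∐ fun i => (U i).obj) :=
    Limits.Sigma.desc fun i => inv (ε.app (U i)) ≫ G.map (Limits.Sigma.ι (fun i => (U i).obj) i)
  have hσ : σ ≫ G.map κ ≫ ε.app (∐ U) = 𝟙 _ := by
    ext1 i
    have := ε.naturality (Limits.Sigma.ι U i)
    simp only [Functor.comp_map, ObjectProperty.ι_map, Functor.id_map] at this
    simpa [σ, κ, ← G.map_comp_assoc] using this
  have : IsSplitEpi (G.map κ ≫ ε.app (∐ U)) := IsSplitEpi.mk' ⟨σ, hσ⟩
  exact (epi_comp_iff_of_isIso (G.map κ) (ε.app (∐ U))).1 inferInstance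

lemma exists_mem_forall_nonempty_of_epi_sigma {I : Type u} (U : I → Sheaf J (Type u))
    [Epi (terminal.from (∐ U))] (d : C) :
    ∃ R ∈ J d, ∀ ⦃e : C⦄ (f : e ⟶ d), R f → ∃ i, Nonempty ((U i).obj.obj (op e)) := by
  have : IsLocallySurjective (terminal.from (∐ U)) := (isLocallySurjective_iff_epi' _ _).2 ‹_›
  have := isLocallySurjective_sigmaDesc_ι_hom U
  let t : (⊤_ Sheaf J (Type u)).obj.obj (op d) :=
    (PreservesTerminal.iso (sheafToPresheaf J (Type u) ⋙ (evaluation Cᵒᵖ (Type u)).obj (op d))).inv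
      (Types.terminalIso.inv PUnit.unit)
  refine ⟨_, Presheaf.imageSieve_mem J
    ((Limits.Sigma.desc fun i => (Limits.Sigma.ι U i).hom) ≫ (terminal.from (∐ U)).hom) t, ?_⟩
  rintro e f ⟨q, -⟩
  obtain ⟨⟨i⟩, v, -⟩ := Types.jointly_surjective_of_isColimit
    (isColimitOfPreserves ((evaluation Cᵒᵖ (Type u)).obj (op e)) (colimit.isColimit _)) q
  exact ⟨i, ⟨v⟩⟩

end CategoryTheory.Sheaf

open CategoryTheory.Sheaf in
lemma IsLocallyConstantObj.locallyDecidableEq {C : Type u} [SmallCategory C]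
    {J : GrothendieckTopology C} {X : Sheaf J (Type u)} (hX : IsLocallyConstantObj X) :
    LocallyDecidableEq X := by
  obtain ⟨I, U, hU, htriv⟩ := hX
  choose S τ hτ using htriv
  intro d x y
  obtain ⟨R, hR, hsec⟩ := exists_mem_forall_nonempty_of_epi_sigma U d
  refine decidedSieve_mem_of_forall_mem hR fun e f hf => ?_
  obtain ⟨i, ⟨u⟩⟩ := hsec f hf
  exact decidedSieve_mem_of_iso_constantSheaf_prod (τ i) (hτ i) u _ _

/-- locally constant objects of a Grothendieck topos are
decidable. -/
theorem locallyConstant_decidable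
    {C : Type u} [SmallCategory C] {J : GrothendieckTopology C}
    (X : Sheaf J (Type u)) (hX : IsLocallyConstantObj X) :
    IsDecidableObj X :=
  hX.locallyDecidableEq.isDecidableObj
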